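/- Let H : B_R → ℝ² be smooth with H = 0 on ∂B_R and div H = 0, and suppose H solves H_t − H·∇u + u·∇H + H div u = νΔH for a smooth vector field u vanishing on ∂B_R. Then (1/4) d/dt ∫|H|⁴ dx + ν ∫ |∇H|²|H|² dx + (ν/2) ∫ |∇|H|²|² dx ≤ C ∫ |∇u| |H|⁴ dx. -/

import Mathlib

open MeasureTheory Real

abbrev E2 := EuclideanSpace ℝ (Fin 2)

noncomputable def pd (i : Fin 2) (f : E2 → ℝ) (x : E2) : ℝ :=
  fderiv ℝ f x (EuclideanSpace.single i (1 : ℝ))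

noncomputable def divg (v : E2 → E2) (x : E2) : ℝ :=
  ∑ i : Fin 2, pd i (fun y => v y i) x

noncomputable def gradsq (v : E2 → E2) (x : E2) : ℝ :=
  ∑ i : Fin 2, ∑ j : Fin 2, (pd i (fun y => v y j) x) ^ 2

noncomputable def lapc (f : E2 → ℝ) (x : E2) : ℝ :=
  ∑ i : Fin 2, iteratedFDeriv ℝ 2 f x (fun _ => EuclideanSpace.single i (1 : ℝ))

-- norm squared
lemma normsq (w : E2) : ‖w‖^2 = ∑ j, (w j)^2 := by
  rw [EuclideanSpace.norm_eq, Real.sq_sqrt (by positivity)]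
  simp [sq_abs]

-- dual norm
lemma dualnorm (ℓ : E2 →L[ℝ] ℝ) : ‖ℓ‖^2 = ∑ i, (ℓ (EuclideanSpace.single i 1))^2 := by
  set g := (InnerProductSpace.toDual ℝ E2).symm ℓ with hg
  have hℓ : ∀ v, ℓ v = inner ℝ g v := by
    intro v; rw [hg]; simp [InnerProductSpace.toDual_symm_apply]
  have h1 : ‖ℓ‖ = ‖g‖ := by
    rw [hg]; exact ((InnerProductSpace.toDual ℝ E2).symm.norm_map ℓ).symm
  rw [h1, normsq]
  congr 1; ext i
  rw [hℓ]
  congr 1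
  rw [real_inner_comm]
  simp [EuclideanSpace.inner_single_left]

-- product rule for pd
lemma pd_mul {a b : E2 → ℝ} {x : E2} (ha : DifferentiableAt ℝ a x)
    (hb : DifferentiableAt ℝ b x) (i : Fin 2) :
    pd i (fun y => a y * b y) x = a x * pd i b x + b x * pd i a x := by
  unfold pd
  rw [fderiv_fun_mul ha hb]
  simp [mul_comm]

lemma pd_const_mul {b : E2 → ℝ} {x : E2} (c : ℝ)
    (hb : DifferentiableAt ℝ b x) (i : Fin 2) :
    pd i (fun y => c * b y) x = c * pd i b x := by
  unfold pd; rw [fderiv_const_mul hb]; simp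

lemma pd_add {a b : E2 → ℝ} {x : E2} (ha : DifferentiableAt ℝ a x)
    (hb : DifferentiableAt ℝ b x) (i : Fin 2) :
    pd i (fun y => a y + b y) x = pd i a x + pd i b x := by
  unfold pd; rw [fderiv_fun_add ha hb]; simp

-- coordinate bound
lemma coord_le_norm (w : E2) (j : Fin 2) : |w j| ≤ ‖w‖ := by
  have h1 : (w j)^2 ≤ ‖w‖^2 := by
    rw [normsq]
    exact Finset.single_le_sum (f := fun k => (w k)^2) (fun k _ => sq_nonneg _) (Finset.mem_univ j)
  have h2 : |w j|^2 ≤ ‖w‖^2 := by rwa [sq_abs]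
  exact abs_le_of_sq_le_sq' h2 (norm_nonneg w) |>.2

lemma norm_single (i : Fin 2) : ‖EuclideanSpace.single i (1:ℝ)‖ = 1 := by
  simp [EuclideanSpace.norm_single]

lemma fderiv_coord {v : E2 → E2} {x : E2} (hv : DifferentiableAt ℝ v x) (j : Fin 2) :
    fderiv ℝ (fun y => v y j) x
      = (EuclideanSpace.proj j : E2 →L[ℝ] ℝ).comp (fderiv ℝ v x) := by
  have h : (fun y => v y j) = fun y => (EuclideanSpace.proj j : E2 →L[ℝ] ℝ) (v y) := rfl
  rw [h]
  rw [show (fun y => (EuclideanSpace.proj j : E2 →L[ℝ] ℝ) (v y))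
      = (EuclideanSpace.proj j : E2 →L[ℝ] ℝ) ∘ v from rfl]
  rw [fderiv_comp x (EuclideanSpace.proj j).differentiableAt hv,
    ContinuousLinearMap.fderiv]

lemma pd_coord_le {v : E2 → E2} {x : E2} (hv : DifferentiableAt ℝ v x) (i j : Fin 2) :
    |pd i (fun y => v y j) x| ≤ ‖fderiv ℝ v x‖ := by
  unfold pd
  rw [fderiv_coord hv j]
  simp only [ContinuousLinearMap.comp_apply]
  calc |(EuclideanSpace.proj j) (fderiv ℝ v x (EuclideanSpace.single i 1))|
      ≤ ‖fderiv ℝ v x (EuclideanSpace.single i 1)‖ := coord_le_norm _ j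
    _ ≤ ‖fderiv ℝ v x‖ * ‖EuclideanSpace.single i (1:ℝ)‖ := (fderiv ℝ v x).le_opNorm _
    _ = ‖fderiv ℝ v x‖ := by rw [norm_single, mul_one]


lemma lapc_eq {f : E2 → ℝ} (hf : ContDiff ℝ (⊤ : ℕ∞) f) (x : E2) :
    lapc f x = ∑ i : Fin 2, pd i (fun y => pd i f y) x := by
  unfold lapc pd
  congr 1; ext i
  rw [iteratedFDeriv_two_apply]
  have hd : DifferentiableAt ℝ (fderiv ℝ f) x :=
    (hf.fderiv_right (m := (⊤ : ℕ∞)) (by simp)).differentiable (by simp) |>.differentiableAt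
  rw [fderiv_clm_apply hd (differentiableAt_const _)]
  simp

lemma vanish {R : ℝ} (hR : 0 < R) {ψ : E2 → ℝ} (hψ : ContDiff ℝ (⊤ : ℕ∞) ψ)
    (h0 : ∀ x ∈ Metric.sphere (0:E2) R, ψ x = 0) :
    ∃ K, 0 ≤ K ∧ ∀ x ∈ Metric.closedBall (0:E2) R, |ψ x| ≤ K * (R - ‖x‖) := by
  obtain ⟨K0, hK0⟩ := (isCompact_closedBall (0:E2) R).exists_bound_of_continuousOn
    ((hψ.fderiv_right (m := (⊤ : ℕ∞)) (by simp)).continuous.norm.continuousOn)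
  set K := max K0 0 with hK
  refine ⟨K, le_max_right _ _, ?_⟩
  intro x hx
  have hXcb : ∀ y ∈ Metric.closedBall (0:E2) R, ‖fderiv ℝ ψ y‖ ≤ K := by
    intro y hy
    calc ‖fderiv ℝ ψ y‖ = ‖‖fderiv ℝ ψ y‖‖ := by rw [norm_norm]
      _ ≤ K0 := hK0 y hy
      _ ≤ K := le_max_left _ _
  have hdiff : ∀ y ∈ Metric.closedBall (0:E2) R, DifferentiableAt ℝ ψ y :=
    fun y _ => (hψ.differentiable (by simp)).differentiableAt
  have key : ∀ x' ∈ Metric.sphere (0:E2) R, x ∈ Metric.closedBall (0:E2) R →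
      |ψ x| ≤ K * ‖x - x'‖ := by
    intro x' hx' hxc
    have hx'c : x' ∈ Metric.closedBall (0:E2) R := Metric.sphere_subset_closedBall hx'
    have := Convex.norm_image_sub_le_of_norm_fderiv_le hdiff hXcb
      (convex_closedBall (0:E2) R) hx'c hxc
    rw [h0 x' hx'] at this
    simpa using this
  rcases eq_or_ne x 0 with rfl | hx0
  · have hsp : (R : ℝ) • (EuclideanSpace.single 0 (1:ℝ)) ∈ Metric.sphere (0:E2) R := by
      simp [norm_smul, abs_of_pos hR, EuclideanSpace.norm_single]
    have := key _ hsp hx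
    simpa [norm_smul, abs_of_pos hR, EuclideanSpace.norm_single] using this
  · have hxn : 0 < ‖x‖ := norm_pos_iff.2 hx0
    have hxR : ‖x‖ ≤ R := by simpa [Metric.mem_closedBall, dist_eq_norm] using hx
    set x' := (R / ‖x‖) • x with hx'def
    have hx' : x' ∈ Metric.sphere (0:E2) R := by
      simp [hx'def, norm_smul, abs_of_pos (div_pos hR hxn), div_mul_cancel₀ _ hxn.ne', hR.le]
    have hnorm : ‖x - x'‖ = R - ‖x‖ := by
      have : x - x' = (1 - R / ‖x‖) • x := by
        rw [hx'def, sub_smul, one_smul]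
      rw [this, norm_smul, Real.norm_eq_abs]
      rw [abs_of_nonpos (by rw [sub_nonpos]; exact (one_le_div hxn).2 hxR)]
      field_simp
      ring
    have := key x' hx' hx
    rwa [hnorm] at this


noncomputable abbrev ee : E2 ≃L[ℝ] (Fin 2 → ℝ) :=
  PiLp.continuousLinearEquiv 2 ℝ (fun _ : Fin 2 => ℝ)

-- basic facts about ee
example (x : E2) (i : Fin 2) : (ee x) i = x i := by simp
example (x : Fin 2 → ℝ) (i : Fin 2) : (ee.symm x) i = x i := by simp
example (i : Fin 2) : ee.symm (Pi.single i 1) = EuclideanSpace.single i 1 := by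
  ext j; simp [EuclideanSpace.single_apply, Pi.single_apply]
example (x : E2) : (MeasurableEquiv.toLp 2 (Fin 2 → ℝ)).symm x = ee x := by
  rfl

lemma coord_le_norm' (w : E2) (j : Fin 2) : |w j| ≤ ‖w‖ := by
  have h1 : (w j)^2 ≤ ‖w‖^2 := by
    rw [EuclideanSpace.norm_eq, Real.sq_sqrt (by positivity)]
    simpa [sq_abs] using
      Finset.single_le_sum (f := fun k => (w k)^2) (fun k _ => sq_nonneg _) (Finset.mem_univ j)
  have h2 : |w j|^2 ≤ ‖w‖^2 := by rwa [sq_abs]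
  exact (abs_le_of_sq_le_sq' h2 (norm_nonneg w)).2

lemma divg_eq_fderiv {F : E2 → E2} {x : E2} (hF : DifferentiableAt ℝ F x) :
    divg F x = ∑ i : Fin 2, (fderiv ℝ F x (EuclideanSpace.single i 1)) i := by
  unfold divg pd
  congr 1; ext i
  have h : (fun y => F y i) = fun y => (EuclideanSpace.proj i : E2 →L[ℝ] ℝ) (F y) := rfl
  rw [h, show (fun y => (EuclideanSpace.proj i : E2 →L[ℝ] ℝ) (F y))
      = (EuclideanSpace.proj i : E2 →L[ℝ] ℝ) ∘ F from rfl,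
    fderiv_comp x (EuclideanSpace.proj i).differentiableAt hF,
    ContinuousLinearMap.fderiv]
  rfl

lemma divg_integral_zero {R : ℝ} (hR : 0 < R) {F : E2 → E2} (hF : ContDiff ℝ (⊤ : ℕ∞) F)
    {K : ℝ} (hK : ∀ x ∈ Metric.closedBall (0:E2) R, ‖F x‖ ≤ K * (R - ‖x‖)^2) :
    ∫ x in Metric.ball (0:E2) R, divg F x = 0 := by
  have hK0 : 0 ≤ K := by
    have h0 := hK 0 (by simp [hR.le])
    have : (0:ℝ) ≤ K * (R - ‖(0:E2)‖)^2 := le_trans (norm_nonneg _) h0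
    simp only [norm_zero, sub_zero] at this
    nlinarith [mul_pos hR hR]
  -- the indicator field and its derivative
  set G : E2 → E2 := Set.indicator (Metric.ball (0:E2) R) F with hGdef
  set G' : E2 → E2 →L[ℝ] E2 :=
    Set.indicator (Metric.ball (0:E2) R) (fun x => fderiv ℝ F x) with hG'def
  have hFd : Differentiable ℝ F := hF.differentiable (by simp)
  -- G vanishes outside the ball
  have hGz : ∀ x : E2, x ∉ Metric.ball (0:E2) R → G x = 0 := by
    intro x hx; simp [hGdef, Set.indicator_of_notMem hx]
  have hG'z : ∀ x : E2, x ∉ Metric.ball (0:E2) R → G' x = 0 := by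
    intro x hx; simp [hG'def, Set.indicator_of_notMem hx]
  -- quadratic bound for G near the sphere
  have hGbound : ∀ x₀ : E2, ‖x₀‖ = R → ∀ y : E2, ‖G y‖ ≤ K * ‖y - x₀‖^2 := by
    intro x₀ hx₀ y
    by_cases hy : y ∈ Metric.ball (0:E2) R
    · have hyR : ‖y‖ < R := by simpa [Metric.mem_ball, dist_eq_norm] using hy
      have h1 : ‖G y‖ = ‖F y‖ := by rw [hGdef, Set.indicator_of_mem hy]
      have h2 : ‖F y‖ ≤ K * (R - ‖y‖)^2 :=
        hK y (Metric.ball_subset_closedBall hy)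
      have h3 : R - ‖y‖ ≤ ‖y - x₀‖ := by
        calc R - ‖y‖ = ‖x₀‖ - ‖y‖ := by rw [hx₀]
          _ ≤ ‖x₀ - y‖ := norm_sub_norm_le _ _
          _ = ‖y - x₀‖ := norm_sub_rev _ _
      have h4 : (R - ‖y‖)^2 ≤ ‖y - x₀‖^2 := by
        apply sq_le_sq' <;> nlinarith [norm_nonneg (y - x₀)]
      rw [h1]
      calc ‖F y‖ ≤ K * (R - ‖y‖)^2 := h2
        _ ≤ K * ‖y - x₀‖^2 := by nlinarith
    · rw [hGz y hy]; simp; positivity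
  -- differentiability of G everywhere
  have hG : ∀ x : E2, HasFDerivAt G (G' x) x := by
    intro x
    rcases lt_trichotomy ‖x‖ R with hlt | heq | hgt
    · have hmem : x ∈ Metric.ball (0:E2) R := by
        simpa [Metric.mem_ball, dist_eq_norm] using hlt
      have hev : G =ᶠ[nhds x] F := by
        filter_upwards [Metric.isOpen_ball.mem_nhds hmem] with y hy
        rw [hGdef]; exact Set.indicator_of_mem hy F
      have : HasFDerivAt F (fderiv ℝ F x) x := (hFd x).hasFDerivAt
      have hGx : G' x = fderiv ℝ F x := by
        rw [hG'def]; exact Set.indicator_of_mem hmem _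
      rw [hGx]
      exact this.congr_of_eventuallyEq hev
    · have hnm : x ∉ Metric.ball (0:E2) R := by
        simp [Metric.mem_ball, dist_eq_norm, heq]
      rw [hG'z x hnm]
      rw [hasFDerivAt_iff_isLittleO_nhds_zero]
      rw [Asymptotics.isLittleO_iff]
      intro c hc
      have hδ : 0 < c / (K + 1) := by positivity
      filter_upwards [Metric.ball_mem_nhds (0:E2) hδ] with h hh
      have hb := hGbound x heq (x + h)
      simp only [add_sub_cancel_left] at hb
      have hhn : ‖h‖ < c / (K+1) := by simpa [Metric.mem_ball, dist_eq_norm] using hh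
      have hGx0 : G x = 0 := hGz x hnm
      simp only [hGx0, ContinuousLinearMap.zero_apply, sub_zero]
      calc ‖G (x + h)‖ ≤ K * ‖h‖^2 := hb
        _ ≤ K * (c/(K+1)) * ‖h‖ := by
            have hkk : K * ‖h‖ ≤ K * (c/(K+1)) := mul_le_mul_of_nonneg_left hhn.le hK0
            nlinarith [norm_nonneg h, hkk]
        _ ≤ c * ‖h‖ := by
            apply mul_le_mul_of_nonneg_right _ (norm_nonneg h)
            rw [div_eq_mul_inv]
            have : K * (c * (K+1)⁻¹) = c * (K * (K+1)⁻¹) := by ring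
            rw [this]
            have h2 : K * (K+1)⁻¹ ≤ 1 := by
              rw [mul_inv_le_iff₀ (by linarith)]; linarith
            nlinarith
    · have hnm : ∀ y : E2, R < ‖y‖ → y ∉ Metric.ball (0:E2) R := by
        intro y hy; simp [Metric.mem_ball, dist_eq_norm]; linarith
      have hev : G =ᶠ[nhds x] (fun _ => 0) := by
        have hopen : IsOpen {y : E2 | R < ‖y‖} := by
          have : {y : E2 | R < ‖y‖} = (fun y : E2 => ‖y‖) ⁻¹' (Set.Ioi R) := rfl
          rw [this]; exact isOpen_Ioi.preimage continuous_norm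
        filter_upwards [hopen.mem_nhds hgt] with y hy
        exact hGz y (hnm y hy)
      rw [hG'z x (hnm x hgt)]
      exact (hasFDerivAt_const (0:E2) x).congr_of_eventuallyEq hev
  -- continuity of G
  have hGc : Continuous G := continuous_iff_continuousAt.2 fun x => (hG x).continuousAt
  -- the scalar divergence of F and its indicator
  set ψ : E2 → ℝ := fun z => ∑ i : Fin 2, (fderiv ℝ F z (EuclideanSpace.single i 1)) i
    with hψdef
  have hψc : Continuous ψ := by
    apply continuous_finset_sum; intro i _
    exact (EuclideanSpace.proj i).continuous.comp
      ((hF.continuous_fderiv (by simp)).clm_apply continuous_const)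
  have hsingle : ∀ i : Fin 2, ee.symm (Pi.single i 1) = EuclideanSpace.single i 1 := by
    intro i; ext j; simp [EuclideanSpace.single_apply, Pi.single_apply]
  have hφ : ∀ z : E2, (∑ i : Fin 2, (G' z (EuclideanSpace.single i 1)) i)
      = Set.indicator (Metric.ball (0:E2) R) ψ z := by
    intro z
    by_cases hz : z ∈ Metric.ball (0:E2) R
    · rw [Set.indicator_of_mem hz, hψdef]
      have : G' z = fderiv ℝ F z := by rw [hG'def]; exact Set.indicator_of_mem hz _
      rw [this]
    · rw [Set.indicator_of_notMem hz, hG'z z hz]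
      simp
  -- box setup
  set a : Fin 2 → ℝ := fun _ => -(R+1) with hadef
  set b : Fin 2 → ℝ := fun _ => (R+1) with hbdef
  have hab : a ≤ b := by intro i; rw [hadef, hbdef]; simp; linarith
  set fhat : (Fin 2 → ℝ) → (Fin 2 → ℝ) := fun x => ee (G (ee.symm x)) with hfhatdef
  set f'hat : (Fin 2 → ℝ) → (Fin 2 → ℝ) →L[ℝ] (Fin 2 → ℝ) := fun x =>
    ((ee : E2 →L[ℝ] (Fin 2 → ℝ)).comp ((G' (ee.symm x)).comp
      ((ee.symm : (Fin 2 → ℝ) ≃L[ℝ] E2) : (Fin 2 → ℝ) →L[ℝ] E2))) with hf'hatdef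
  have hHd : ∀ x ∈ (Set.univ.pi fun i => Set.Ioo (a i) (b i)) \ (∅ : Set (Fin 2 → ℝ)),
      HasFDerivAt fhat (f'hat x) x := by
    intro x _
    have h1 : HasFDerivAt (fun y => G (ee.symm y))
        ((G' (ee.symm x)).comp ((ee.symm : (Fin 2 → ℝ) ≃L[ℝ] E2) : (Fin 2 → ℝ) →L[ℝ] E2)) x :=
      (hG (ee.symm x)).comp x ee.symm.hasFDerivAt
    exact ((ee : E2 →L[ℝ] (Fin 2 → ℝ)).hasFDerivAt).comp x h1
  have hHc : ContinuousOn fhat (Set.Icc a b) :=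
    (ee.continuous.comp (hGc.comp ee.symm.continuous)).continuousOn
  -- the box integrand
  have hpt : ∀ x : Fin 2 → ℝ, (∑ i : Fin 2, (f'hat x) (Pi.single i 1) i)
      = Set.indicator (Metric.ball (0:E2) R) ψ (ee.symm x) := by
    intro x
    rw [← hφ (ee.symm x)]
    rfl
  have hSmeas : MeasurableSet ((fun x : Fin 2 → ℝ => ee.symm x) ⁻¹' (Metric.ball (0:E2) R)) :=
    (Metric.isOpen_ball.preimage ee.symm.continuous).measurableSet
  have hHi : IntegrableOn (fun x : Fin 2 → ℝ => ∑ i : Fin 2, (f'hat x) (Pi.single i 1) i)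
      (Set.Icc a b) volume := by
    have heq : (fun x : Fin 2 → ℝ => ∑ i : Fin 2, (f'hat x) (Pi.single i 1) i)
        = Set.indicator ((fun x : Fin 2 → ℝ => ee.symm x) ⁻¹' (Metric.ball (0:E2) R))
            (fun x => ψ (ee.symm x)) := by
      funext x
      rw [hpt x]
      simp only [Set.indicator, Set.mem_preimage]
      rfl
    rw [heq]
    exact ((hψc.comp ee.symm.continuous).continuousOn.integrableOn_compact
      isCompact_Icc).indicator hSmeas
  have hbox := integral_divergence_of_hasFDerivAt_off_countable (n := 1)
    (a := a) (b := b) hab fhat f'hat ∅ Set.countable_empty hHc hHd hHi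
  -- faces vanish
  have hfaces : ∀ (i : Fin 2) (c : ℝ), |c| = R + 1 →
      ∀ x : Fin 1 → ℝ, fhat (i.insertNth c x) i = 0 := by
    intro i c hc x
    have hcoord : (ee.symm (i.insertNth c x)) i = c := by simp
    have hnorm : R < ‖ee.symm (i.insertNth c x)‖ := by
      have := coord_le_norm' (ee.symm (i.insertNth c x)) i
      rw [hcoord, hc] at this; linarith
    have hnm : ee.symm (i.insertNth c x) ∉ Metric.ball (0:E2) R := by
      simp only [Metric.mem_ball, dist_zero_right, not_lt]
      linarith
    rw [hfhatdef]
    simp only [hGz _ hnm]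
    rfl
  have hsum0 : (∑ i : Fin 2,
      ((∫ x in Set.Icc (a ∘ i.succAbove) (b ∘ i.succAbove), fhat (i.insertNth (b i) x) i) -
        ∫ x in Set.Icc (a ∘ i.succAbove) (b ∘ i.succAbove), fhat (i.insertNth (a i) x) i)) = 0 := by
    apply Finset.sum_eq_zero
    intro i _
    have h1 : ∀ x : Fin 1 → ℝ, fhat (i.insertNth (b i) x) i = 0 := by
      intro x; apply hfaces i _ _ x
      show |(R+1 : ℝ)| = R + 1
      rw [abs_of_pos (by linarith)]
    have h2 : ∀ x : Fin 1 → ℝ, fhat (i.insertNth (a i) x) i = 0 := by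
      intro x; apply hfaces i _ _ x
      show |(-(R+1) : ℝ)| = R + 1
      rw [abs_neg, abs_of_pos (by linarith)]
    simp only [h1, h2, integral_zero]
    ring
  rw [hsum0] at hbox
  -- now transfer back
  have step1 : ∫ x in Metric.ball (0:E2) R, divg F x
      = ∫ x in Metric.ball (0:E2) R, Set.indicator (Metric.ball (0:E2) R) ψ x := by
    apply setIntegral_congr_fun measurableSet_ball
    intro z hz
    rw [Set.indicator_of_mem hz, hψdef]
    exact divg_eq_fderiv (hFd z)
  have step2 : ∫ x in Metric.ball (0:E2) R, Set.indicator (Metric.ball (0:E2) R) ψ x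
      = ∫ x : E2, Set.indicator (Metric.ball (0:E2) R) ψ x := by
    apply setIntegral_eq_integral_of_forall_compl_eq_zero
    intro x hx
    exact Set.indicator_of_notMem hx _
  have hmp := EuclideanSpace.volume_preserving_symm_measurableEquiv_toLp (Fin 2)
  have step3 : ∫ x : E2, Set.indicator (Metric.ball (0:E2) R) ψ x
      = ∫ y : Fin 2 → ℝ, Set.indicator (Metric.ball (0:E2) R) ψ (ee.symm y) := by
    rw [← hmp.integral_comp (MeasurableEquiv.toLp 2 (Fin 2 → ℝ)).symm.measurableEmbedding
      (fun y => Set.indicator (Metric.ball (0:E2) R) ψ (ee.symm y))]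
    have hmx : ∀ x : E2, ee.symm ((MeasurableEquiv.toLp 2 (Fin 2 → ℝ)).symm x) = x :=
      fun x => rfl
    simp only [hmx]
  have step4 : ∫ y : Fin 2 → ℝ, Set.indicator (Metric.ball (0:E2) R) ψ (ee.symm y)
      = ∫ y in Set.Icc a b, Set.indicator (Metric.ball (0:E2) R) ψ (ee.symm y) := by
    symm
    apply setIntegral_eq_integral_of_forall_compl_eq_zero
    intro y hy
    apply Set.indicator_of_notMem
    have : ∃ i : Fin 2, ¬ (a i ≤ y i ∧ y i ≤ b i) := by
      by_contra hcon
      push_neg at hcon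
      exact hy ⟨fun i => (hcon i).1, fun i => (hcon i).2⟩
    obtain ⟨i, hi⟩ := this
    have hyi : R + 1 ≤ |y i| := by
      rw [hadef, hbdef] at hi
      simp only [not_and_or, not_le] at hi
      rcases hi with h | h
      · rw [abs_of_neg (by linarith)]; linarith
      · rw [abs_of_pos (by linarith)]; linarith
    have hcd : (ee.symm y) i = y i := by simp
    have := coord_le_norm' (ee.symm y) i
    rw [hcd] at this
    simp only [Metric.mem_ball, dist_eq_norm, not_lt, sub_zero]
    linarith
  have step5 : ∫ y in Set.Icc a b, Set.indicator (Metric.ball (0:E2) R) ψ (ee.symm y)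
      = ∫ y in Set.Icc a b, ∑ i : Fin 2, (f'hat y) (Pi.single i 1) i := by
    apply setIntegral_congr_fun measurableSet_Icc
    intro y _
    exact (hpt y).symm
  rw [step1, step2, step3, step4, step5]
  exact hbox


-- ===== helper lemmas for the main proof =====

lemma cd_diff {f : E2 → ℝ} (hf : ContDiff ℝ (⊤ : ℕ∞) f) (x : E2) : DifferentiableAt ℝ f x :=
  (hf.differentiable (by simp)).differentiableAt

lemma pd_contDiff {f : E2 → ℝ} (hf : ContDiff ℝ (⊤ : ℕ∞) f) (i : Fin 2) :
    ContDiff ℝ (⊤ : ℕ∞) (pd i f) := by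
  unfold pd
  exact (hf.fderiv_right (m := (⊤ : ℕ∞)) (by simp)).clm_apply contDiff_const

lemma integrableOn_ball_of_continuous {R : ℝ} {f : E2 → ℝ} (hf : Continuous f) :
    IntegrableOn f (Metric.ball (0:E2) R) :=
  (hf.continuousOn.integrableOn_compact (isCompact_closedBall (0:E2) R)).mono_set
    Metric.ball_subset_closedBall

lemma pd_sq {a : E2 → ℝ} {x : E2} (ha : DifferentiableAt ℝ a x) (i : Fin 2) :
    pd i (fun y => (a y)^2) x = 2 * a x * pd i a x := by
  have h : (fun y => (a y)^2) = fun y => a y * a y := by funext y; ring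
  rw [h, pd_mul ha ha]; ring

-- the product-of-two-vanishing-functions divergence lemma
lemma divg_prod_integral_zero {R : ℝ} (hR : 0 < R) {f g : E2 → ℝ} {W : E2 → E2}
    (hf : ContDiff ℝ (⊤ : ℕ∞) f) (hg : ContDiff ℝ (⊤ : ℕ∞) g) (hW : ContDiff ℝ (⊤ : ℕ∞) W)
    (hf0 : ∀ x ∈ Metric.sphere (0:E2) R, f x = 0)
    (hg0 : ∀ x ∈ Metric.sphere (0:E2) R, g x = 0) :
    ∫ x in Metric.ball (0:E2) R, divg (fun y => (f y * g y) • W y) x = 0 := by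
  obtain ⟨K1, hK1n, hK1⟩ := vanish hR hf hf0
  obtain ⟨K2, hK2n, hK2⟩ := vanish hR hg hg0
  obtain ⟨M0, hM0⟩ := (isCompact_closedBall (0:E2) R).exists_bound_of_continuousOn
    hW.continuous.continuousOn
  set M := max M0 0 with hM
  have hMn : 0 ≤ M := le_max_right _ _
  have hMb : ∀ x ∈ Metric.closedBall (0:E2) R, ‖W x‖ ≤ M :=
    fun x hx => le_trans (hM0 x hx) (le_max_left _ _)
  apply divg_integral_zero hR ((hf.mul hg).smul hW) (K := K1 * K2 * M)
  intro x hx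
  have hr : 0 ≤ R - ‖x‖ := by
    have : ‖x‖ ≤ R := by simpa [Metric.mem_closedBall, dist_eq_norm] using hx
    linarith
  calc ‖(f x * g x) • W x‖ = |f x| * |g x| * ‖W x‖ := by
        rw [norm_smul, Real.norm_eq_abs, abs_mul]
    _ ≤ (K1 * (R - ‖x‖)) * (K2 * (R - ‖x‖)) * M := by
        apply mul_le_mul
        · apply mul_le_mul (hK1 x hx) (hK2 x hx) (abs_nonneg _) (by positivity)
        · exact hMb x hx
        · exact norm_nonneg _
        · positivity
    _ = K1 * K2 * M * (R - ‖x‖)^2 := by ring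


-- small continuity lemmas
lemma c_pd {f : E2 → ℝ} (hf : ContDiff ℝ (⊤ : ℕ∞) f) (i : Fin 2) : Continuous (pd i f) :=
  (pd_contDiff hf i).continuous

lemma c_lapc {f : E2 → ℝ} (hf : ContDiff ℝ (⊤ : ℕ∞) f) : Continuous (lapc f) := by
  have : lapc f = fun x => ∑ i : Fin 2, pd i (fun y => pd i f y) x := by
    funext x; exact lapc_eq hf x
  rw [this]
  exact continuous_finset_sum _ fun i _ => c_pd (pd_contDiff hf i) i

lemma c_divg {F : E2 → E2} (hF : ContDiff ℝ (⊤ : ℕ∞) F) : Continuous (divg F) := by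
  have : divg F = fun x => ∑ i : Fin 2, pd i (fun y => F y i) x := rfl
  rw [this]
  exact continuous_finset_sum _ fun i _ => c_pd (contDiff_euclidean.mp hF i) i

set_option maxHeartbeats 2000000 in
lemma key_ineq {ν R : ℝ} (hν : 0 < ν) (hR : 0 < R) (h v : E2 → E2)
    (hh : ContDiff ℝ (⊤ : ℕ∞) h) (hv : ContDiff ℝ (⊤ : ℕ∞) v)
    (hb : ∀ x ∈ Metric.sphere (0:E2) R, h x = 0)
    (vb : ∀ x ∈ Metric.sphere (0:E2) R, v x = 0) :
    (1/4) * (∫ x in Metric.ball (0:E2) R,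
        4 * (∑ j : Fin 2, (h x j)^2) * (∑ j : Fin 2, h x j *
          (ν * lapc (fun y => h y j) x
            + (∑ i : Fin 2, h x i * pd i (fun y => v y j) x)
            - (∑ i : Fin 2, v x i * pd i (fun y => h y j) x)
            - h x j * divg v x)))
      + ν * (∫ x in Metric.ball (0:E2) R, gradsq h x * (∑ j : Fin 2, (h x j)^2))
      + (ν/2) * (∫ x in Metric.ball (0:E2) R,
          ∑ i : Fin 2, (pd i (fun y => ∑ j : Fin 2, (h y j)^2) x)^2)
    ≤ 4 * ∫ x in Metric.ball (0:E2) R, ‖fderiv ℝ v x‖ * (∑ j : Fin 2, (h x j)^2)^2 := by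
  set B := Metric.ball (0:E2) R with hB
  set nsq : E2 → ℝ := fun y => ∑ j : Fin 2, (h y j)^2 with hnsq
  have hcj : ∀ j : Fin 2, ContDiff ℝ (⊤ : ℕ∞) (fun y => h y j) := fun j => contDiff_euclidean.mp hh j
  have hvjs : ∀ j : Fin 2, ContDiff ℝ (⊤ : ℕ∞) (fun y => v y j) := fun j => contDiff_euclidean.mp hv j
  have hnsqs : ContDiff ℝ (⊤ : ℕ∞) nsq := by
    rw [hnsq]
    exact ContDiff.sum fun j _ => (hcj j).pow 2
  have hzj : ∀ j : Fin 2, ∀ x ∈ Metric.sphere (0:E2) R, h x j = 0 := by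
    intro j x hx; rw [hb x hx]; rfl
  have hz : ∀ x ∈ Metric.sphere (0:E2) R, nsq x = 0 := by
    intro x hx; rw [hnsq]
    simp only [hzj _ x hx]
    simp
  -- differentiability shortcuts
  have dnsq : ∀ x, DifferentiableAt ℝ nsq x := fun x => cd_diff hnsqs x
  have dhj : ∀ (j : Fin 2) x, DifferentiableAt ℝ (fun y => h y j) x := fun j x => cd_diff (hcj j) x
  have dvj : ∀ (j : Fin 2) x, DifferentiableAt ℝ (fun y => v y j) x := fun j x => cd_diff (hvjs j) x
  have dpdh : ∀ (i j : Fin 2) x, DifferentiableAt ℝ (pd i (fun y => h y j)) x :=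
    fun i j x => cd_diff (pd_contDiff (hcj j) i) x
  -- the vector fields
  set Vg : Fin 2 → E2 → E2 := fun j y => ee.symm (fun i => pd i (fun z => h z j) y) with hVg
  have hVgc : ∀ (j i : Fin 2), (fun y => (Vg j y) i) = pd i (fun z => h z j) := by
    intro j i; funext y; rw [hVg]
    rfl
  have hVgs : ∀ j : Fin 2, ContDiff ℝ (⊤ : ℕ∞) (Vg j) := by
    intro j
    apply contDiff_euclidean.mpr
    intro i
    have := hVgc j i
    rw [show (fun y => Vg j y i) = (fun y => (Vg j y) i) from rfl, this]
    exact pd_contDiff (hcj j) i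
  -- the three divergence identities
  have Z1 : ∀ j : Fin 2,
      ∫ x in B, divg (fun y => (nsq y * h y j) • Vg j y) x = 0 := by
    intro j
    exact divg_prod_integral_zero hR hnsqs (hcj j) (hVgs j) hz (hzj j)
  have Z2 : ∫ x in B, divg (fun y => (nsq y * nsq y) • v y) x = 0 :=
    divg_prod_integral_zero hR hnsqs hnsqs hv hz hz
  -- pointwise identity E3: derivative of nsq
  have E3 : ∀ (i : Fin 2) x, pd i nsq x = ∑ j : Fin 2, 2 * h x j * pd i (fun y => h y j) x := by
    intro i x
    have : nsq = fun y => (h y 0)^2 + (h y 1)^2 := by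
      rw [hnsq]; funext y; rw [Fin.sum_univ_two]
    rw [this, pd_add (a := fun y => h y 0 ^ 2) (b := fun y => h y 1 ^ 2) ((dhj 0 x).pow 2) ((dhj 1 x).pow 2),
      pd_sq (dhj 0 x), pd_sq (dhj 1 x), Fin.sum_univ_two]
  -- pointwise identity E1
  have E1 : ∀ (j : Fin 2) x, divg (fun y => (nsq y * h y j) • Vg j y) x
      = nsq x * h x j * lapc (fun y => h y j) x
        + nsq x * (∑ i : Fin 2, (pd i (fun y => h y j) x)^2)
        + h x j * (∑ i : Fin 2, pd i nsq x * pd i (fun y => h y j) x) := by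
    intro j x
    have hco : ∀ i : Fin 2, (fun y => ((nsq y * h y j) • Vg j y) i)
        = fun y => (nsq y * h y j) * pd i (fun z => h z j) y := by
      intro i; funext y; rw [hVg]; rfl
    unfold divg
    rw [lapc_eq (hcj j) x]
    rw [Fin.sum_univ_two, hco 0, hco 1]
    rw [pd_mul (a := fun y => nsq y * h y j) ((dnsq x).mul (dhj j x)) (dpdh 0 j x) 0,
        pd_mul (a := fun y => nsq y * h y j) ((dnsq x).mul (dhj j x)) (dpdh 1 j x) 1,
        pd_mul (dnsq x) (dhj j x) 0, pd_mul (dnsq x) (dhj j x) 1]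
    rw [Fin.sum_univ_two, Fin.sum_univ_two, Fin.sum_univ_two]
    ring
  -- pointwise identity E2
  have E2p : ∀ x, divg (fun y => (nsq y * nsq y) • v y) x
      = nsq x * nsq x * divg v x + 2 * nsq x * (∑ i : Fin 2, v x i * pd i nsq x) := by
    intro x
    have hco : ∀ i : Fin 2, (fun y => ((nsq y * nsq y) • v y) i)
        = fun y => (nsq y * nsq y) * v y i := by
      intro i; funext y; rfl
    unfold divg
    rw [Fin.sum_univ_two, hco 0, hco 1]
    rw [pd_mul (a := fun y => nsq y * nsq y) ((dnsq x).mul (dnsq x)) (dvj 0 x) 0,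
        pd_mul (a := fun y => nsq y * nsq y) ((dnsq x).mul (dnsq x)) (dvj 1 x) 1,
        pd_mul (dnsq x) (dnsq x) 0, pd_mul (dnsq x) (dnsq x) 1]
    simp only [Fin.sum_univ_two]
    ring
  -- continuity of all the integrands
  have cnsq : Continuous nsq := hnsqs.continuous
  have chj : ∀ j : Fin 2, Continuous (fun y => h y j) := fun j => (hcj j).continuous
  have cvj : ∀ j : Fin 2, Continuous (fun y => v y j) := fun j => (hvjs j).continuous
  have cgrad : Continuous (gradsq h) := by
    have : gradsq h = fun x => ∑ i : Fin 2, ∑ j : Fin 2, (pd i (fun y => h y j) x)^2 := rfl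
    rw [this]
    exact continuous_finset_sum _ fun i _ => continuous_finset_sum _
      fun j _ => (c_pd (hcj j) i).pow 2
  set P : E2 → ℝ := fun x =>
      4 * (∑ j : Fin 2, (h x j)^2) * (∑ j : Fin 2, h x j *
        (ν * lapc (fun y => h y j) x
          + (∑ i : Fin 2, h x i * pd i (fun y => v y j) x)
          - (∑ i : Fin 2, v x i * pd i (fun y => h y j) x)
          - h x j * divg v x)) with hP
  set A : E2 → ℝ := fun x => gradsq h x * nsq x with hA
  set Bf : E2 → ℝ := fun x => ∑ i : Fin 2, (pd i nsq x)^2 with hBf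
  set S : E2 → ℝ := fun x =>
      nsq x * (∑ j : Fin 2, h x j * (∑ i : Fin 2, h x i * pd i (fun y => v y j) x))
        - (3/4) * nsq x^2 * divg v x with hS
  set D1 : Fin 2 → E2 → ℝ := fun j x => divg (fun y => (nsq y * h y j) • Vg j y) x with hD1
  set D2 : E2 → ℝ := fun x => divg (fun y => (nsq y * nsq y) • v y) x with hD2
  have cP : Continuous P := by
    rw [hP]
    apply Continuous.mul (continuous_const.mul (continuous_finset_sum _ fun j _ => (chj j).pow 2))
    apply continuous_finset_sum _ fun j _ => ?_
    apply (chj j).mul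
    apply Continuous.sub
    apply Continuous.sub
    apply Continuous.add (continuous_const.mul (c_lapc (hcj j)))
    · exact continuous_finset_sum _ fun i _ => (chj i).mul (c_pd (hvjs j) i)
    · exact continuous_finset_sum _ fun i _ => (cvj i).mul (c_pd (hcj j) i)
    · exact ((chj j).mul (c_divg hv))
  have cA : Continuous A := cgrad.mul cnsq
  have cBf : Continuous Bf := continuous_finset_sum _ fun i _ => (c_pd hnsqs i).pow 2
  have cS : Continuous S := by
    rw [hS]
    apply Continuous.sub
    · exact cnsq.mul (continuous_finset_sum _ fun j _ => (chj j).mul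
        (continuous_finset_sum _ fun i _ => (chj i).mul (c_pd (hvjs j) i)))
    · exact (continuous_const.mul (cnsq.pow 2)).mul (c_divg hv)
  have cD1 : ∀ j : Fin 2, Continuous (D1 j) := by
    intro j; rw [hD1]
    exact c_divg ((hnsqs.mul (hcj j)).smul (hVgs j))
  have cD2 : Continuous D2 := by
    rw [hD2]
    exact c_divg ((hnsqs.mul hnsqs).smul hv)
  have cRHS : Continuous (fun x => ‖fderiv ℝ v x‖ * (nsq x)^2) :=
    ((hv.continuous_fderiv (by simp)).norm).mul (cnsq.pow 2)
  -- integrability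
  have iP : IntegrableOn P B := integrableOn_ball_of_continuous cP
  have iA : IntegrableOn A B := integrableOn_ball_of_continuous cA
  have iBf : IntegrableOn Bf B := integrableOn_ball_of_continuous cBf
  have iS : IntegrableOn S B := integrableOn_ball_of_continuous cS
  have iD1 : ∀ j : Fin 2, IntegrableOn (D1 j) B :=
    fun j => integrableOn_ball_of_continuous (cD1 j)
  have iD2 : IntegrableOn D2 B := integrableOn_ball_of_continuous cD2
  have iRHS : IntegrableOn (fun x => ‖fderiv ℝ v x‖ * (nsq x)^2) B :=
    integrableOn_ball_of_continuous cRHS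
  -- the pointwise algebraic identity
  have PT : ∀ x : E2, (1/4) * P x + ν * A x + (ν/2) * Bf x
      = ν * (D1 0 x + D1 1 x) - (1/4) * D2 x + S x := by
    intro x
    simp only [hP, hA, hBf, hS, hD1, hD2]
    rw [E1 0 x, E1 1 x, E2p x]
    have hgr : gradsq h x = ∑ i : Fin 2, ∑ j : Fin 2, (pd i (fun y => h y j) x)^2 := rfl
    rw [hgr]
    have hnz : ∀ z : E2, nsq z = (h z 0)^2 + (h z 1)^2 := by
      intro z; simp only [hnsq]; rw [Fin.sum_univ_two]
    simp only [E3, Fin.sum_univ_two, hnz]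
    ring
  -- pointwise bound for S
  have hbt : ∀ (a b p N : ℝ), |p| ≤ N → a * b * p ≤ (a^2+b^2)/2 * N := by
    intro a b p N hp
    have hN : 0 ≤ N := le_trans (abs_nonneg _) hp
    have h1 : a*b*p ≤ |a*b| * N := by
      calc a*b*p ≤ |a*b*p| := le_abs_self _
        _ = |a*b| * |p| := abs_mul _ _
        _ ≤ |a*b| * N := mul_le_mul_of_nonneg_left hp (abs_nonneg _)
    have h2 : |a*b| ≤ (a^2+b^2)/2 := by
      rw [abs_mul]
      nlinarith [sq_nonneg (|a|-|b|), sq_abs a, sq_abs b, abs_nonneg a, abs_nonneg b]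
    nlinarith [h1, h2, hN]
  have PB : ∀ x : E2, S x ≤ 4 * (‖fderiv ℝ v x‖ * (nsq x)^2) := by
    intro x
    have hdv : DifferentiableAt ℝ v x := (hv.differentiable (by simp)).differentiableAt
    set N := ‖fderiv ℝ v x‖ with hNdef
    have hN : 0 ≤ N := norm_nonneg _
    have b00 := pd_coord_le hdv 0 0
    have b01 := pd_coord_le hdv 0 1
    have b10 := pd_coord_le hdv 1 0
    have b11 := pd_coord_le hdv 1 1
    have hnx : nsq x = (h x 0)^2 + (h x 1)^2 := by
      simp only [hnsq]; rw [Fin.sum_univ_two]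
    have hnsq0 : 0 ≤ nsq x := by rw [hnx]; positivity
    simp only [hS]
    unfold divg
    simp only [Fin.sum_univ_two]
    have t1 := hbt (h x 0) (h x 0) _ _ b00
    have t2 := hbt (h x 0) (h x 1) _ _ b10
    have t3 := hbt (h x 1) (h x 0) _ _ b01
    have t4 := hbt (h x 1) (h x 1) _ _ b11
    have habs : |pd 0 (fun y => v y 0) x + pd 1 (fun y => v y 1) x| ≤ 2 * N := by
      calc |pd 0 (fun y => v y 0) x + pd 1 (fun y => v y 1) x|
          ≤ |pd 0 (fun y => v y 0) x| + |pd 1 (fun y => v y 1) x| := abs_add_le _ _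
        _ ≤ 2 * N := by linarith
    have hdivb : -(3/4) * nsq x^2 * (pd 0 (fun y => v y 0) x + pd 1 (fun y => v y 1) x)
        ≤ (3/2) * N * nsq x ^2 := by
      have h1 : -(pd 0 (fun y => v y 0) x + pd 1 (fun y => v y 1) x) ≤ 2*N := by
        have := neg_abs_le (pd 0 (fun y => v y 0) x + pd 1 (fun y => v y 1) x)
        linarith [habs, this]
      nlinarith [sq_nonneg (nsq x), h1]
    have hstr : nsq x * (h x 0 * (h x 0 * pd 0 (fun y => v y 0) x + h x 1 * pd 1 (fun y => v y 0) x)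
        + h x 1 * (h x 0 * pd 0 (fun y => v y 1) x + h x 1 * pd 1 (fun y => v y 1) x))
        ≤ 2 * N * nsq x^2 := by
      have hsum : h x 0 * (h x 0 * pd 0 (fun y => v y 0) x + h x 1 * pd 1 (fun y => v y 0) x)
          + h x 1 * (h x 0 * pd 0 (fun y => v y 1) x + h x 1 * pd 1 (fun y => v y 1) x)
          ≤ 2 * N * nsq x := by
        have e1 : h x 0 * (h x 0 * pd 0 (fun y => v y 0) x) = h x 0 * h x 0 * pd 0 (fun y => v y 0) x := by ring
        nlinarith [t1, t2, t3, t4, hnx]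
      nlinarith [hsum, hnsq0, mul_le_mul_of_nonneg_left hsum hnsq0]
    nlinarith [hdivb, hstr]
  -- assembling the integrals
  have i1 : IntegrableOn (fun x => (1/4) * P x + ν * A x) B := by
    exact (iP.const_mul _).add (iA.const_mul _)
  have i2 : IntegrableOn (fun x => (ν/2) * Bf x) B := iBf.const_mul _
  have comb1 : (1/4) * (∫ x in B, P x) + ν * (∫ x in B, A x) + (ν/2) * (∫ x in B, Bf x)
      = ∫ x in B, ((1/4) * P x + ν * A x + (ν/2) * Bf x) := by
    rw [integral_add i1 i2, integral_add (iP.const_mul _) (iA.const_mul _),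
        integral_const_mul, integral_const_mul, integral_const_mul]
  have comb2 : ∫ x in B, ((1/4) * P x + ν * A x + (ν/2) * Bf x)
      = ∫ x in B, (ν * (D1 0 x + D1 1 x) - (1/4) * D2 x + S x) := by
    apply integral_congr_ae
    exact Filter.Eventually.of_forall fun x => PT x
  have i3 : IntegrableOn (fun x => ν * (D1 0 x + D1 1 x) - (1/4) * D2 x) B := by
    exact (((iD1 0).add (iD1 1)).const_mul _).sub (iD2.const_mul _)
  have i4 : IntegrableOn (fun x => ν * (D1 0 x + D1 1 x)) B := by
    exact ((iD1 0).add (iD1 1)).const_mul _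
  have z10 : (∫ x in B, D1 0 x) = 0 := Z1 0
  have z11 : (∫ x in B, D1 1 x) = 0 := Z1 1
  have z2 : (∫ x in B, D2 x) = 0 := Z2
  have comb3 : ∫ x in B, (ν * (D1 0 x + D1 1 x) - (1/4) * D2 x + S x) = ∫ x in B, S x := by
    rw [integral_add i3 iS, integral_sub i4 (iD2.const_mul _),
        integral_const_mul, integral_const_mul,
        integral_add (iD1 0) (iD1 1), z10, z11, z2]
    ring
  have comb4 : ∫ x in B, S x ≤ ∫ x in B, 4 * (‖fderiv ℝ v x‖ * (nsq x)^2) :=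
    setIntegral_mono_on iS (iRHS.const_mul _) measurableSet_ball fun x _ => PB x
  have comb5 : ∫ x in B, 4 * (‖fderiv ℝ v x‖ * (nsq x)^2)
      = 4 * ∫ x in B, ‖fderiv ℝ v x‖ * (nsq x)^2 := integral_const_mul _ _
  calc (1/4) * (∫ x in B, P x) + ν * (∫ x in B, A x) + (ν/2) * (∫ x in B, Bf x)
      = ∫ x in B, S x := by rw [comb1, comb2, comb3]
    _ ≤ 4 * ∫ x in B, ‖fderiv ℝ v x‖ * (nsq x)^2 := by rw [← comb5]; exact comb4


set_option maxHeartbeats 1000000 in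
/-- `L⁴` energy inequality for the magnetic field:
`(1/4) d/dt ∫|H|⁴ + ν∫|∇H|²|H|² + (ν/2)∫|∇|H|²|² ≤ C∫|∇u||H|⁴`. -/
theorem stmt12 :
    ∃ C : ℝ, 0 < C ∧ ∀ (ν R T : ℝ), 0 < ν → 0 < R → 0 < T →
      ∀ (H u : ℝ → E2 → E2),
        ContDiff ℝ (⊤ : ℕ∞) (fun p : ℝ × E2 => H p.1 p.2) →
        ContDiff ℝ (⊤ : ℕ∞) (fun p : ℝ × E2 => u p.1 p.2) →
        (∀ t : ℝ, ∀ x ∈ Metric.sphere (0 : E2) R, H t x = 0 ∧ u t x = 0) →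
        (∀ t : ℝ, ∀ x ∈ Metric.ball (0 : E2) R, divg (H t) x = 0) →
        (∀ t ∈ Set.Icc (0 : ℝ) T, ∀ x ∈ Metric.ball (0 : E2) R, ∀ j : Fin 2,
          deriv (fun s => H s x j) t
            = ν * lapc (fun y => H t y j) x
              + (∑ i : Fin 2, H t x i * pd i (fun y => u t y j) x)
              - (∑ i : Fin 2, u t x i * pd i (fun y => H t y j) x)
              - H t x j * divg (u t) x) →
        ∀ t ∈ Set.Ioo (0 : ℝ) T,
          (1 / 4) * deriv (fun s => ∫ x in Metric.ball (0 : E2) R, ‖H s x‖ ^ 4) t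
            + ν * (∫ x in Metric.ball (0 : E2) R, gradsq (H t) x * ‖H t x‖ ^ 2)
            + (ν / 2) * (∫ x in Metric.ball (0 : E2) R,
                ‖fderiv ℝ (fun y => ‖H t y‖ ^ 2) x‖ ^ 2)
          ≤ C * ∫ x in Metric.ball (0 : E2) R, ‖fderiv ℝ (u t) x‖ * ‖H t x‖ ^ 4 := by
  refine ⟨4, by norm_num, ?_⟩
  intro ν R T hν hR hT H u hH hu hbd hdivH hpde t ht
  obtain ⟨ht0, htT⟩ := ht
  set B := Metric.ball (0:E2) R with hBdef
  -- smooth slices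
  have hHt : ContDiff ℝ (⊤ : ℕ∞) (H t) := by
    have : (H t) = (fun p : ℝ × E2 => H p.1 p.2) ∘ (fun x : E2 => (t, x)) := rfl
    rw [this]; exact hH.comp (contDiff_const.prodMk contDiff_id)
  have hut : ContDiff ℝ (⊤ : ℕ∞) (u t) := by
    have : (u t) = (fun p : ℝ × E2 => u p.1 p.2) ∘ (fun x : E2 => (t, x)) := rfl
    rw [this]; exact hu.comp (contDiff_const.prodMk contDiff_id)
  have hb : ∀ x ∈ Metric.sphere (0:E2) R, H t x = 0 := fun x hx => (hbd t x hx).1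
  have vb : ∀ x ∈ Metric.sphere (0:E2) R, u t x = 0 := fun x hx => (hbd t x hx).2
  -- rewrite norms into sums of squares
  have hQeq : ∀ (s : ℝ) (x : E2), ‖H s x‖^4 = (∑ j : Fin 2, (H s x j)^2)^2 := by
    intro s x
    rw [show (4:ℕ) = 2*2 from rfl, pow_mul, normsq (H s x)]
  have hn2 : ∀ (s : ℝ) (x : E2), ‖H s x‖^2 = ∑ j : Fin 2, (H s x j)^2 :=
    fun s x => normsq (H s x)
  have hfn : (fun y => ‖H t y‖^2) = (fun y => ∑ j : Fin 2, (H t y j)^2) :=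
    funext fun y => hn2 t y
  simp only [hQeq, hn2, hfn]
  -- dual norm of the differential of nsq
  have hdual : ∀ x : E2, ‖fderiv ℝ (fun y => ∑ j : Fin 2, (H t y j)^2) x‖^2
      = ∑ i : Fin 2, (pd i (fun y => ∑ j : Fin 2, (H t y j)^2) x)^2 := by
    intro x
    rw [dualnorm (fderiv ℝ (fun y => ∑ j : Fin 2, (H t y j)^2) x)]
    rfl
  simp only [hdual]
  -- joint smoothness of the L⁴ density
  have hQ : ContDiff ℝ (⊤ : ℕ∞) (fun p : ℝ × E2 => (∑ j : Fin 2, (H p.1 p.2 j)^2)^2) :=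
    (ContDiff.sum fun j _ => (contDiff_euclidean.mp hH j).pow 2).pow 2
  set Qd : ℝ × E2 → ℝ := fun p =>
    fderiv ℝ (fun q : ℝ × E2 => (∑ j : Fin 2, (H q.1 q.2 j)^2)^2) p ((1:ℝ), (0:E2)) with hQddef
  have hQdc : Continuous Qd := by
    rw [hQddef]
    exact (hQ.continuous_fderiv (by simp)).clm_apply continuous_const
  have hQsd : ∀ (s : ℝ) (x : E2),
      HasDerivAt (fun s' => (∑ j : Fin 2, (H s' x j)^2)^2) (Qd (s, x)) s := by
    intro s x
    have h1 : HasFDerivAt (fun q : ℝ × E2 => (∑ j : Fin 2, (H q.1 q.2 j)^2)^2)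
        (fderiv ℝ (fun q : ℝ × E2 => (∑ j : Fin 2, (H q.1 q.2 j)^2)^2) (s,x)) (s,x) :=
      (hQ.differentiable (by simp) (s,x)).hasFDerivAt
    have h2 : HasDerivAt (fun s' : ℝ => (s', x)) ((1:ℝ), (0:E2)) s :=
      (hasDerivAt_id s).prodMk (hasDerivAt_const s x)
    exact h1.comp_hasDerivAt s h2
  -- dominated differentiation under the integral sign
  obtain ⟨M, hM⟩ := ((isCompact_Icc (a := t-1) (b := t+1)).prod
    (isCompact_closedBall (0:E2) R)).exists_bound_of_continuousOn hQdc.continuousOn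
  have hDer : HasDerivAt (fun s => ∫ x in B, (∑ j : Fin 2, (H s x j)^2)^2)
      (∫ x in B, Qd (t, x)) t := by
    have key := hasDerivAt_integral_of_dominated_loc_of_deriv_le (μ := volume.restrict B)
      (F := fun s x => (∑ j : Fin 2, (H s x j)^2)^2) (F' := fun s x => Qd (s, x))
      (x₀ := t) (bound := fun _ => M) (s := Metric.ball t 1) (Metric.ball_mem_nhds t one_pos)
      ?meas ?int ?meas' ?bdd ?bint ?diff
    · exact key.2
    case meas =>
      apply Filter.Eventually.of_forall
      intro s
      exact ((continuous_finset_sum _ fun j _ =>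
        (((contDiff_euclidean.mp hH j).continuous.comp (Continuous.prodMk_right s)).pow 2)).pow 2).aestronglyMeasurable
    case int =>
      exact integrableOn_ball_of_continuous ((continuous_finset_sum _ fun j _ =>
        (((contDiff_euclidean.mp hH j).continuous.comp (Continuous.prodMk_right t)).pow 2)).pow 2)
    case meas' =>
      exact (hQdc.comp (Continuous.prodMk_right t)).aestronglyMeasurable
    case bdd =>
      filter_upwards [ae_restrict_mem measurableSet_ball] with x hx
      intro s hs
      apply hM
      constructor
      · have : |s - t| < 1 := by simpa [Real.dist_eq] using hs
        have h1 := abs_lt.mp this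
        exact ⟨by linarith [h1.1], by linarith [h1.2]⟩
      · exact Metric.ball_subset_closedBall hx
    case bint =>
      exact integrableOn_const measure_ball_lt_top.ne
    case diff =>
      apply Filter.Eventually.of_forall
      intro x s hs
      exact hQsd s x
  rw [hDer.deriv]
  -- rewrite the integrand using the PDE
  have hcong : ∫ x in B, Qd (t, x) = ∫ x in B,
      4 * (∑ j : Fin 2, (H t x j)^2) * (∑ j : Fin 2, H t x j *
        (ν * lapc (fun y => H t y j) x
          + (∑ i : Fin 2, H t x i * pd i (fun y => u t y j) x)
          - (∑ i : Fin 2, u t x i * pd i (fun y => H t y j) x)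
          - H t x j * divg (u t) x)) := by
    apply setIntegral_congr_fun measurableSet_ball
    intro x hx
    have hsj : ∀ j : Fin 2, ContDiff ℝ (⊤ : ℕ∞) (fun s : ℝ => H s x j) := by
      intro j
      have : (fun s : ℝ => H s x j)
          = (fun p : ℝ × E2 => H p.1 p.2 j) ∘ (fun s : ℝ => (s, x)) := rfl
      rw [this]
      exact (contDiff_euclidean.mp hH j).comp (contDiff_id.prodMk contDiff_const)
    have hder : ∀ j : Fin 2, HasDerivAt (fun s : ℝ => H s x j)
        (deriv (fun s : ℝ => H s x j) t) t :=
      fun j => ((hsj j).differentiable (by simp) t).hasDerivAt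
    have hfun : (fun s' : ℝ => (∑ j : Fin 2, (H s' x j)^2)^2)
        = fun s' : ℝ => ((H s' x 0)^2 + (H s' x 1)^2)^2 := by
      funext s'; rw [Fin.sum_univ_two]
    have hval : HasDerivAt (fun s' : ℝ => (∑ j : Fin 2, (H s' x j)^2)^2)
        (2 * ((H t x 0)^2 + (H t x 1)^2)^1
          * (2 * (H t x 0)^1 * deriv (fun s : ℝ => H s x 0) t
            + 2 * (H t x 1)^1 * deriv (fun s : ℝ => H s x 1) t)) t := by
      rw [hfun]
      exact (((hder 0).pow 2).add ((hder 1).pow 2)).pow 2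
    have huniq : Qd (t, x) = 2 * ((H t x 0)^2 + (H t x 1)^2)^1
          * (2 * (H t x 0)^1 * deriv (fun s : ℝ => H s x 0) t
            + 2 * (H t x 1)^1 * deriv (fun s : ℝ => H s x 1) t) :=
      (hQsd t x).unique hval
    show Qd (t, x) = _
    rw [huniq]
    rw [hpde t ⟨ht0.le, htT.le⟩ x hx 0, hpde t ⟨ht0.le, htT.le⟩ x hx 1]
    simp only [Fin.sum_univ_two]
    ring
  rw [hcong]
  exact key_ineq hν hR (H t) (u t) hHt hut hb vb
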